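/- There exists an IL_set(P0)-frame which is not an IL_set(M0)-frame. -/
import Mathlib


/-- Modal formulas of interpretability logic: atoms, ⊥, →, □, ▷. -/
inductive Fm : Type
  | atom : ℕ → Fm
  | bot : Fm
  | imp : Fm → Fm → Fm
  | box : Fm → Fm
  | rhd : Fm → Fm → Fm
deriving DecidableEq

namespace Fm
def neg (A : Fm) : Fm := .imp A .bot
def conj (A B : Fm) : Fm := neg (.imp A (neg B))
def disj (A B : Fm) : Fm := .imp (neg A) B
def dia (A : Fm) : Fm := neg (.box (neg A))
end Fm

/-- `f` is a boolean propositional evaluation (treats □ and ▷ formulas as atoms). -/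
def PropEval (f : Fm → Bool) : Prop :=
  f Fm.bot = false ∧ ∀ A B, f (Fm.imp A B) = (!(f A) || f B)

/-- Propositional tautology. -/
def Taut (A : Fm) : Prop := ∀ f, PropEval f → f A = true

/-- Derivability in the interpretability logic IL extended with extra axioms `X`. -/
inductive Prov (X : Fm → Prop) : Fm → Prop
  | taut {A} : Taut A → Prov X A
  | extra {A} : X A → Prov X A
  | l1 (A B) : Prov X (.imp (.box (.imp A B)) (.imp (.box A) (.box B)))
  | l2 (A) : Prov X (.imp (.box A) (.box (.box A)))
  | l3 (A) : Prov X (.imp (.box (.imp (.box A) A)) (.box A))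
  | j1 (A B) : Prov X (.imp (.box (.imp A B)) (.rhd A B))
  | j2 (A B C) : Prov X (.imp (Fm.conj (.rhd A B) (.rhd B C)) (.rhd A C))
  | j3 (A B C) : Prov X (.imp (Fm.conj (.rhd A C) (.rhd B C)) (.rhd (Fm.disj A B) C))
  | j4 (A B) : Prov X (.imp (.rhd A B) (.imp (Fm.dia A) (Fm.dia B)))
  | j5 (A) : Prov X (.rhd (Fm.dia A) A)
  | mp {A B} : Prov X (.imp A B) → Prov X A → Prov X B
  | nec {A} : Prov X A → Prov X (.box A)

/-- Derivability in plain IL. -/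
def ILProv : Fm → Prop := Prov (fun _ => False)

/-- A Veltman frame (IL-frame). -/
structure VFrame where
  W : Type
  ne : Nonempty W
  R : W → W → Prop
  /-- `S x y z` means `y S_x z`. -/
  S : W → W → W → Prop
  R_trans : ∀ {x y z}, R x y → R y z → R x z
  R_cwf : WellFounded (fun x y => R y x)
  S_R : ∀ {x y z}, S x y z → R x y ∧ R x z
  S_refl : ∀ {x y}, R x y → S x y y
  R_S : ∀ {x y z}, R x y → R y z → S x y z
  S_trans : ∀ {x u v w}, S x u v → S x v w → S x u w

structure VModel extends VFrame where
  val : W → ℕ → Prop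

/-- Satisfaction on Veltman models. -/
def VSat (M : VModel) : M.W → Fm → Prop
  | w, .atom n => M.val w n
  | _, .bot => False
  | w, .imp A B => VSat M w A → VSat M w B
  | w, .box A => ∀ v, M.R w v → VSat M v A
  | w, .rhd A B => ∀ u, M.R w u → VSat M u A → ∃ v, M.S w u v ∧ VSat M v B

/-- Validity on a Veltman frame. -/
def VFrame.Valid (F : VFrame) (A : Fm) : Prop :=
  ∀ val : F.W → ℕ → Prop, ∀ w : F.W, VSat { toVFrame := F, val := val } w A

/-- A generalized Veltman frame (ILset-frame). -/
structure GFrame where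
  W : Type
  ne : Nonempty W
  R : W → W → Prop
  /-- `S w x Y` means `x S_w Y`. -/
  S : W → W → Set W → Prop
  R_trans : ∀ {x y z}, R x y → R y z → R x z
  R_cwf : WellFounded (fun x y => R y x)
  S_ne : ∀ {w x Y}, S w x Y → Y.Nonempty
  S_R : ∀ {w x Y}, S w x Y → R w x ∧ ∀ y ∈ Y, R w y
  S_refl : ∀ {w x}, R w x → S w x {x}
  S_qtrans : ∀ {w x Y}, S w x Y → ∀ y ∈ Y, ∀ Z, y ∉ Z → S w y Z → S w x Z
  R_S : ∀ {w x y}, R w x → R x y → S w x {y}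

structure GModel extends GFrame where
  val : W → ℕ → Prop

/-- Satisfaction on generalized Veltman models. -/
def GSat (M : GModel) : M.W → Fm → Prop
  | w, .atom n => M.val w n
  | _, .bot => False
  | w, .imp A B => GSat M w A → GSat M w B
  | w, .box A => ∀ v, M.R w v → GSat M v A
  | w, .rhd A B => ∀ x, M.R w x → GSat M x A →
      ∃ Y, M.S w x Y ∧ ∀ y ∈ Y, GSat M y B

/-- Validity on a generalized Veltman frame. -/
def GFrame.Valid (F : GFrame) (A : Fm) : Prop :=
  ∀ val : F.W → ℕ → Prop, ∀ w : F.W, GSat { toGFrame := F, val := val } w A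

/-- Instances of the principle M0. -/
def m0fm (A B C : Fm) : Fm :=
  .imp (.rhd A B) (.rhd (Fm.conj (Fm.dia A) (.box C)) (Fm.conj B (.box C)))

/-- Instances of the principle P0. -/
def p0fm (A B : Fm) : Fm := .imp (.rhd A (Fm.dia B)) (.box (.rhd A B))

/-- Instances of the principle R. -/
def rfm (A B C : Fm) : Fm :=
  .imp (.rhd A B) (.rhd (Fm.neg (.rhd A (Fm.neg C))) (Fm.conj B (.box C)))

/-- Instances of the principle W. -/
def wfm (A B : Fm) : Fm :=
  .imp (.rhd A B) (.rhd A (Fm.conj B (.box (Fm.neg A))))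

/-- Instances of the principle W*. -/
def wstarfm (A B C : Fm) : Fm :=
  .imp (.rhd A B)
    (.rhd (Fm.conj B (.box C)) (Fm.conj (Fm.conj B (.box C)) (.box (Fm.neg A))))

/-- Instances of the principle R*. -/
def rstarfm (A B C : Fm) : Fm :=
  .imp (.rhd A B)
    (.rhd (Fm.neg (.rhd A (Fm.neg C))) (Fm.conj (Fm.conj B (.box C)) (.box (Fm.neg A))))

/-- The frame condition for M0 on generalized Veltman frames. -/
def GFrame.M0Cond (F : GFrame) : Prop :=
  ∀ w x y Y, F.R w x → F.R x y → F.S w y Y →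
    ∃ Y', Y' ⊆ Y ∧ F.S w x Y' ∧ ∀ y' ∈ Y', ∀ z, F.R y' z → F.R x z

/-- The frame condition for P0 on generalized Veltman frames. -/
def GFrame.P0Cond (F : GFrame) : Prop :=
  ∀ w x y Y Z, F.R w x → F.R x y → F.S w y Y →
    (∀ y' ∈ Y, ∃ z ∈ Z, F.R y' z) → ∃ Z', Z' ⊆ Z ∧ F.S x y Z'

/-- `Γ` is a choice set for `(w,x)`. -/
def GFrame.ChoiceSet (F : GFrame) (w x : F.W) (Γ : Set F.W) : Prop :=
  ∀ X, F.S w x X → (X ∩ Γ).Nonempty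

/-- The frame condition for R on generalized Veltman frames. -/
def GFrame.RCond (F : GFrame) : Prop :=
  ∀ w x y Y, F.R w x → F.R x y → F.S w y Y →
    ∀ Γ, F.ChoiceSet x y Γ →
      ∃ Y', Y' ⊆ Y ∧ F.S w x Y' ∧ ∀ y' ∈ Y', ∀ z, F.R y' z → z ∈ Γ


abbrev W7 := Fin 7

def R7 : W7 → W7 → Prop := fun a b =>
  (a = 0 ∧ b ≠ 0) ∨ (a = 1 ∧ (b = 2 ∨ b = 5)) ∨ (a = 3 ∧ b = 5) ∨ (a = 4 ∧ b = 6)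

instance : DecidableRel R7 := fun a b => by unfold R7; infer_instance

def S7 : W7 → W7 → Set W7 → Prop := fun w x Y =>
  (R7 w x ∧ Y = {x}) ∨
  (w = 0 ∧ x = 1 ∧ (Y = {2} ∨ Y = {5} ∨ Y = {6} ∨ Y = {3, 4})) ∨
  (w = 0 ∧ x = 2 ∧ (Y = {3, 4} ∨ Y = {5} ∨ Y = {6})) ∨
  (w = 0 ∧ x = 3 ∧ Y = {5}) ∨
  (w = 0 ∧ x = 4 ∧ Y = {6}) ∨
  (w = 1 ∧ x = 2 ∧ Y = {5})

lemma r7_trans : ∀ {x y z : W7}, R7 x y → R7 y z → R7 x z := by decide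

lemma r7_cwf : WellFounded (fun x y : W7 => R7 y x) := by
  have key : ∀ a b : W7, R7 b a → (6 - a.val) < (6 - b.val) := by decide
  exact Subrelation.wf (fun {a b} h => key a b h)
    (InvImage.wf (fun a : W7 => 6 - a.val) Nat.lt_wfRel.wf)

lemma s7_ne : ∀ {w x : W7} {Y : Set W7}, S7 w x Y → Y.Nonempty := by
  intro w x Y h
  rcases h with ⟨_, rfl⟩ | ⟨_, _, rfl | rfl | rfl | rfl⟩ | ⟨_, _, rfl | rfl | rfl⟩ |
    ⟨_, _, rfl⟩ | ⟨_, _, rfl⟩ | ⟨_, _, rfl⟩ <;> simp [Set.Nonempty]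

lemma s7_R : ∀ {w x : W7} {Y : Set W7}, S7 w x Y → R7 w x ∧ ∀ y ∈ Y, R7 w y := by
  intro w x Y h
  rcases h with ⟨hR, rfl⟩ | ⟨rfl, rfl, rfl | rfl | rfl | rfl⟩ | ⟨rfl, rfl, rfl | rfl | rfl⟩ |
    ⟨rfl, rfl, rfl⟩ | ⟨rfl, rfl, rfl⟩ | ⟨rfl, rfl, rfl⟩
  · exact ⟨hR, by intro y hy; simp at hy; subst hy; exact hR⟩
  all_goals refine ⟨by decide, ?_⟩
  all_goals intro y hy; simp at hy
  all_goals first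
    | (subst hy; decide)
    | (rcases hy with rfl | rfl <;> decide)

lemma s7_refl : ∀ {w x : W7}, R7 w x → S7 w x {x} := by
  intro w x h; exact Or.inl ⟨h, rfl⟩

lemma r7_chains : ∀ w x y : W7, R7 w x → R7 x y →
    (w = 0 ∧ x = 1 ∧ y = 2) ∨ (w = 0 ∧ x = 1 ∧ y = 5) ∨
    (w = 0 ∧ x = 3 ∧ y = 5) ∨ (w = 0 ∧ x = 4 ∧ y = 6) := by decide

lemma s7_RS : ∀ {w x y : W7}, R7 w x → R7 x y → S7 w x {y} := by
  intro w x y h1 h2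
  rcases r7_chains w x y h1 h2 with ⟨rfl, rfl, rfl⟩ | ⟨rfl, rfl, rfl⟩ | ⟨rfl, rfl, rfl⟩ | ⟨rfl, rfl, rfl⟩
  · exact Or.inr (Or.inl ⟨rfl, rfl, Or.inl rfl⟩)
  · exact Or.inr (Or.inl ⟨rfl, rfl, Or.inr (Or.inl rfl)⟩)
  · exact Or.inr (Or.inr (Or.inr (Or.inl ⟨rfl, rfl, rfl⟩)))
  · exact Or.inr (Or.inr (Or.inr (Or.inr (Or.inl ⟨rfl, rfl, rfl⟩))))

lemma s7_qtrans : ∀ {w x : W7} {Y : Set W7}, S7 w x Y → ∀ y ∈ Y, ∀ Z : Set W7,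
    y ∉ Z → S7 w y Z → S7 w x Z := by
  intro w x Y hY y hy Z hyZ hZ
  rcases hY with ⟨hR, rfl⟩ | ⟨rfl, rfl, rfl | rfl | rfl | rfl⟩ | ⟨rfl, rfl, rfl | rfl | rfl⟩ |
    ⟨rfl, rfl, rfl⟩ | ⟨rfl, rfl, rfl⟩ | ⟨rfl, rfl, rfl⟩
  · simp at hy; subst hy; exact hZ
  all_goals simp at hy
  all_goals try rcases hy with rfl | rfl
  all_goals simp [S7, R7] at hZ
  all_goals first
    | (exact absurd hZ.symm (by intro h; exact hyZ (h ▸ rfl)))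
    | skip
  all_goals rcases hZ with rfl | rfl | rfl | rfl
  all_goals first
    | solve | simp at hyZ
    | solve | simp [S7, R7]

def F7 : GFrame where
  W := W7
  ne := ⟨0⟩
  R := R7
  S := S7
  R_trans := r7_trans
  R_cwf := r7_cwf
  S_ne := s7_ne
  S_R := s7_R
  S_refl := s7_refl
  S_qtrans := s7_qtrans
  R_S := s7_RS

lemma r7_term : ∀ z : W7, ¬ R7 2 z ∧ ¬ R7 5 z ∧ ¬ R7 6 z := by decide

lemma r7_succ3 : ∀ z : W7, R7 3 z → z = 5 := by decide

lemma F7_p0 : F7.P0Cond := by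
  show ∀ (w x y : W7) (Y Z : Set W7), R7 w x → R7 x y → S7 w y Y →
      (∀ y' ∈ Y, ∃ z ∈ Z, R7 y' z) → ∃ Z', Z' ⊆ Z ∧ S7 x y Z'
  intro w x y Y Z hwx hxy hS hyp
  rcases r7_chains w x y hwx hxy with ⟨rfl, rfl, rfl⟩ | ⟨rfl, rfl, rfl⟩ | ⟨rfl, rfl, rfl⟩ | ⟨rfl, rfl, rfl⟩
  · -- w=0, x=1, y=2
    have hS' : Y = {2} ∨ Y = {3, 4} ∨ Y = {5} ∨ Y = {6} := by
      simpa [S7, R7] using hS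
    rcases hS' with rfl | rfl | rfl | rfl
    · rcases hyp 2 (by simp) with ⟨z, _, hz⟩; exact absurd hz (r7_term z).1
    · rcases hyp 3 (by simp) with ⟨z, hzZ, hz⟩
      have : z = 5 := r7_succ3 z hz
      subst this
      exact ⟨{5}, Set.singleton_subset_iff.mpr hzZ, by simp [S7, R7]⟩
    · rcases hyp 5 (by simp) with ⟨z, _, hz⟩; exact absurd hz (r7_term z).2.1
    · rcases hyp 6 (by simp) with ⟨z, _, hz⟩; exact absurd hz (r7_term z).2.2
  · have hS' : Y = ({5} : Set W7) := by simpa [S7, R7] using hS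
    subst hS'
    rcases hyp 5 (by simp) with ⟨z, _, hz⟩; exact absurd hz (r7_term z).2.1
  · have hS' : Y = ({5} : Set W7) := by simpa [S7, R7] using hS
    subst hS'
    rcases hyp 5 (by simp) with ⟨z, _, hz⟩; exact absurd hz (r7_term z).2.1
  · have hS' : Y = ({6} : Set W7) := by simpa [S7, R7] using hS
    subst hS'
    rcases hyp 6 (by simp) with ⟨z, _, hz⟩; exact absurd hz (r7_term z).2.2

lemma F7_nm0 : ¬ F7.M0Cond := by
  intro h
  have h' : ∀ (w x y : W7) (Y : Set W7), R7 w x → R7 x y → S7 w y Y →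
      ∃ Y', Y' ⊆ Y ∧ S7 w x Y' ∧ ∀ y' ∈ Y', ∀ z, R7 y' z → R7 x z := h
  rcases h' 0 1 2 {3, 4} (by decide) (by decide)
      (by simp [S7, R7]) with ⟨Y', hsub, hS, hcond⟩
  have hS' : Y' = {1} ∨ Y' = {2} ∨ Y' = {5} ∨ Y' = {6} ∨ Y' = {3, 4} := by
    simpa [S7, R7] using hS
  rcases hS' with rfl | rfl | rfl | rfl | rfl
  · have := hsub (Set.mem_singleton 1); simp at this
  · have := hsub (Set.mem_singleton 2); simp at this
  · have := hsub (Set.mem_singleton 5); simp at this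
  · have := hsub (Set.mem_singleton 6); simp at this
  · exact absurd (hcond 4 (by simp) 6 (by decide)) (by decide)

/-- a generalized Veltman frame satisfying the P0 condition
but not the M0 condition. -/
theorem exists_p0_not_m0_gframe : ∃ F : GFrame, F.P0Cond ∧ ¬ F.M0Cond :=
  ⟨F7, F7_p0, F7_nm0⟩
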